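/- ECDSA signature malleability: let p and n be primes, W a Weierstrass curve over the field ZMod p whose affine points form a group, G and Q affine points of W with n • G = 0 and n • Q = 0, and z, r, s ∈ ZMod n with s ≠ 0. If (r, s) is a valid ECDSA signature on the hash z for the public key Q — that is, the point P = ((z·s⁻¹).val) • G + ((r·s⁻¹).val) • Q is a finite affine point with coordinates (x, y) and x.val mod n = r (as elements of ZMod n) — then (r, −s) is also a valid ECDSA signature on z for Q: the point P' = ((z·(−s)⁻¹).val) • G + ((r·(−s)⁻¹).val) • Q equals −P, is a finite affine point, and has the same x-coordinate x, hence also satisfies the verification equation x.val mod n = r. -/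

import Mathlib

namespace ZMod

variable {n : ℕ} [NeZero n] {M : Type*} [AddCommGroup M]

theorem val_neg_nsmul {G : M} (hG : n • G = 0) (a : ZMod n) :
    (-a).val • G = -(a.val • G) := by
  have hmod : (-a).val + a.val ≡ 0 [MOD n] := by
    rw [← ZMod.natCast_eq_natCast_iff]
    simp
  rw [eq_neg_iff_add_eq_zero, ← add_nsmul, nsmul_eq_nsmul_of_modEq hmod hG, zero_nsmul]

theorem val_neg_nsmul_add_val_neg_nsmul {G Q : M} (hG : n • G = 0) (hQ : n • Q = 0)
    (a b : ZMod n) : (-a).val • G + (-b).val • Q = -(a.val • G + b.val • Q) := by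
  rw [val_neg_nsmul hG, val_neg_nsmul hQ, neg_add]

end ZMod

theorem ecdsa_signature_malleability_general
    (p n : ℕ) [Fact p.Prime] [Fact n.Prime]
    (W : WeierstrassCurve.Affine (ZMod p))
    (G Q : W.Point)
    (hG : n • G = 0) (hQ : n • Q = 0)
    (z r s : ZMod n)
    (x y : ZMod p) (h : W.Nonsingular x y)
    (hP : ((z * s⁻¹).val) • G + ((r * s⁻¹).val) • Q =
      WeierstrassCurve.Affine.Point.some _ _ h)
    (hr : ((x.val : ZMod n)) = r) :
    ((z * (-s)⁻¹).val) • G + ((r * (-s)⁻¹).val) • Q =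
        -(WeierstrassCurve.Affine.Point.some _ _ h) ∧
      ∃ (y' : ZMod p) (h' : W.Nonsingular x y'),
        ((z * (-s)⁻¹).val) • G + ((r * (-s)⁻¹).val) • Q =
            WeierstrassCurve.Affine.Point.some _ _ h' ∧
          ((x.val : ZMod n)) = r := by
  have hneg : ((z * (-s)⁻¹).val) • G + ((r * (-s)⁻¹).val) • Q =
      -(WeierstrassCurve.Affine.Point.some _ _ h) := by
    simp only [inv_neg, mul_neg]
    rw [ZMod.val_neg_nsmul_add_val_neg_nsmul hG hQ, hP]
  refine ⟨hneg, W.negY x y, (WeierstrassCurve.Affine.nonsingular_neg x y).mpr h, ?_, hr⟩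
  rw [hneg, WeierstrassCurve.Affine.Point.neg_some]

/-- **ECDSA signature malleability.** Let `p` and `n` be primes, `W` a
Weierstrass curve over the field `ZMod p` (whose affine points form an
additive group), `G` and `Q` affine points of `W` with `n • G = 0` and
`n • Q = 0`, and `z, r, s : ZMod n` with `s ≠ 0`.  If `(r, s)` is a valid
ECDSA signature on the hash `z` for the public key `Q` — that is, the point
`P = ((z·s⁻¹).val) • G + ((r·s⁻¹).val) • Q` is a finite affine point with
coordinates `(x, y)` and `x.val mod n = r` — then `(r, −s)` is also a valid
ECDSA signature on `z` for `Q`: the point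
`P' = ((z·(−s)⁻¹).val) • G + ((r·(−s)⁻¹).val) • Q` equals `−P`, is a finite
affine point with the same `x`-coordinate `x`, hence also satisfies the
verification equation `x.val mod n = r`. -/
theorem ecdsa_signature_malleability
    (p n : ℕ) [Fact p.Prime] [Fact n.Prime]
    (W : WeierstrassCurve.Affine (ZMod p))
    (G Q : W.Point)
    (hG : n • G = 0) (hQ : n • Q = 0)
    (z r s : ZMod n) (hs : s ≠ 0)
    (x y : ZMod p) (h : W.Nonsingular x y)
    (hP : ((z * s⁻¹).val) • G + ((r * s⁻¹).val) • Q =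
      WeierstrassCurve.Affine.Point.some _ _ h)
    (hr : ((x.val : ZMod n)) = r) :
    ((z * (-s)⁻¹).val) • G + ((r * (-s)⁻¹).val) • Q =
        -(WeierstrassCurve.Affine.Point.some _ _ h) ∧
      ∃ (y' : ZMod p) (h' : W.Nonsingular x y'),
        ((z * (-s)⁻¹).val) • G + ((r * (-s)⁻¹).val) • Q =
            WeierstrassCurve.Affine.Point.some _ _ h' ∧
          ((x.val : ZMod n)) = r :=
  ecdsa_signature_malleability_general p n W G Q hG hQ z r s x y h hP hr
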